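/- In an algebraic commutative integral quantale, every regular element (i.e. every join of complemented elements) is pure. -/

import Mathlib

open CompleteLattice

/-- A commutative integral quantale: a complete lattice with a commutative monoid
structure whose unit is the top element, with multiplication distributing over
arbitrary joins. -/
class CommQuantale (A : Type*) extends CompleteLattice A, CommMonoid A where
  one_eq_top : (1 : A) = ⊤
  mul_sSup_distrib : ∀ (a : A) (S : Set A), a * sSup S = ⨆ b ∈ S, a * b

namespace CommQuantale

variable {A : Type*} [CommQuantale A]

/-- m-prime element -/
def MPrime (p : A) : Prop := p < 1 ∧ ∀ a b : A, a * b ≤ p → a ≤ p ∨ b ≤ p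

/-- radical -/
def rad (a : A) : A := sInf {p : A | MPrime p ∧ a ≤ p}

/-- annihilator / negation `c^⊥ = ⋁{x | c·x = 0}` -/
def perp (c : A) : A := sSup {x : A | c * x = ⊥}

/-- residuation `c → b = ⋁{x | c·x ≤ b}` -/
def resid (c b : A) : A := sSup {x : A | c * x ≤ b}

/-- pure element -/
def IsPure (a : A) : Prop :=
  ∀ c : A, IsCompactElement c → c ≤ a → a ⊔ perp c = 1

/-- weakly pure element -/
def IsWPure (a : A) : Prop :=
  ∀ c : A, IsCompactElement c → c ≤ a → a ⊔ resid c (rad ⊥) = 1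

/-- complemented element -/
def IsComplemented (e : A) : Prop := ∃ f : A, e ⊔ f = 1 ∧ e ⊓ f = ⊥

/-- regular element: a join of complemented elements -/
def IsRegular (a : A) : Prop :=
  ∃ S : Set A, (∀ e ∈ S, IsComplemented e) ∧ a = sSup S

/-- Ker operator -/
def Ker (a : A) : A :=
  sSup {d : A | IsCompactElement d ∧ d ≤ a ∧ a ⊔ perp d = 1}

/-- O operator: `O(p) = ⋁{c compact | c^⊥ ≰ p}` -/
def O (p : A) : A := sSup {c : A | IsCompactElement c ∧ ¬ perp c ≤ p}

/-- O operator, as in Section 4: `O(p) = ⋁{d compact | d·e = 0 for some compact e ≰ p}` -/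
def O' (p : A) : A :=
  sSup {d : A | IsCompactElement d ∧ ∃ e : A, IsCompactElement e ∧ ¬ e ≤ p ∧ d * e = ⊥}

/-- algebraic quantale: every element is the join of the compact elements below it -/
def Algebraic (A : Type*) [CommQuantale A] : Prop :=
  ∀ a : A, a = sSup {c : A | IsCompactElement c ∧ c ≤ a}

/-- coherent quantale -/
def Coherent (A : Type*) [CommQuantale A] : Prop :=
  Algebraic A ∧ IsCompactElement (1 : A) ∧
    ∀ c d : A, IsCompactElement c → IsCompactElement d → IsCompactElement (c * d)

end CommQuantale

open CommQuantale


section Aux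
variable {A : Type*} [CommQuantale A]

private lemma q_mul_bot (a : A) : a * ⊥ = ⊥ := by
  have h := CommQuantale.mul_sSup_distrib a ∅
  simpa using h

private lemma q_mul_sup (a b c : A) : a * (b ⊔ c) = a * b ⊔ a * c := by
  have h := CommQuantale.mul_sSup_distrib a {b, c}
  simpa [sSup_pair, iSup_or, iSup_sup_eq] using h

private lemma q_mul_mono_right (a : A) {b c : A} (h : b ≤ c) : a * b ≤ a * c := by
  have : a * c = a * b ⊔ a * c := by rw [← q_mul_sup, sup_eq_right.mpr h]
  rw [this]; exact le_sup_left

private lemma q_le_one (x : A) : x ≤ 1 := by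
  rw [CommQuantale.one_eq_top]; exact le_top

private lemma q_mul_le_left (a b : A) : a * b ≤ a := by
  calc a * b ≤ a * 1 := q_mul_mono_right a (q_le_one b)
  _ = a := mul_one a

private lemma q_mul_le_right (a b : A) : a * b ≤ b := by
  rw [mul_comm]; exact q_mul_le_left b a

private lemma finset_compl (t : Finset A) (ht : ∀ e ∈ t, CommQuantale.IsComplemented e) :
    ∃ f : A, t.sup id ⊔ f = 1 ∧ (t.sup id) * f = ⊥ := by
  classical
  induction t using Finset.induction_on with
  | empty => exact ⟨1, by simp, by simp [mul_one]⟩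
  | @insert e t hnot ih =>
    obtain ⟨g, hg1, hg2⟩ := ht e (Finset.mem_insert_self e t)
    obtain ⟨f, hf1, hf2⟩ := ih (fun x hx => ht x (Finset.mem_insert_of_mem hx))
    have heg : e * g = ⊥ := le_bot_iff.mp (hg2 ▸ le_inf (q_mul_le_left e g) (q_mul_le_right e g))
    refine ⟨g * f, ?_, ?_⟩
    · apply le_antisymm (q_le_one _)
      calc (1 : A) = (e ⊔ g) * (t.sup id ⊔ f) := by rw [hg1, hf1, one_mul]
      _ = (e ⊔ g) * t.sup id ⊔ (e * f ⊔ g * f) := by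
          rw [q_mul_sup, mul_comm (e ⊔ g) f, q_mul_sup, mul_comm f e, mul_comm f g]
      _ ≤ (insert e t).sup id ⊔ g * f := by
          simp only [Finset.sup_insert, id]
          exact sup_le (le_sup_of_le_left (le_sup_of_le_right (q_mul_le_right _ _)))
            (sup_le (le_sup_of_le_left (le_sup_of_le_left (q_mul_le_left e f))) le_sup_right)
    · rw [Finset.sup_insert]
      show (e ⊔ t.sup id) * (g * f) = ⊥
      rw [mul_comm (e ⊔ t.sup id) (g * f), q_mul_sup]
      have h1 : g * f * e = ⊥ := by
        rw [mul_comm g f, mul_assoc, mul_comm g e, heg, q_mul_bot]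
      have h2 : g * f * t.sup id = ⊥ := by
        rw [mul_comm g f, mul_assoc, mul_comm g (t.sup id), ← mul_assoc,
          mul_comm f (t.sup id), hf2, mul_comm, q_mul_bot]
      rw [h1, h2, sup_idem]

end Aux

theorem stmt16 {A : Type*} [CommQuantale A]
    (halg : Algebraic A) (a : A) (ha : CommQuantale.IsRegular a) : IsPure a := by
  obtain ⟨S, hS, rfl⟩ := ha
  intro c hc hca
  obtain ⟨t, htS, hct⟩ := (isCompactElement_iff_exists_le_sSup_of_le_sSup (k := c)).mp hc S hca
  obtain ⟨f, hf1, hf2⟩ := finset_compl t (fun e he => hS e (htS he))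
  have hfperp : f ≤ perp c := by
    apply _root_.le_sSup
    show c * f = ⊥
    have : c * f ≤ t.sup id * f := by rw [mul_comm c f, mul_comm (t.sup id) f]; exact q_mul_mono_right f hct
    exact le_bot_iff.mp (hf2 ▸ this)
  have hta : t.sup id ≤ sSup S := Finset.sup_le (fun e he => le_sSup (htS he))
  apply le_antisymm (q_le_one _)
  calc (1 : A) = t.sup id ⊔ f := hf1.symm
  _ ≤ sSup S ⊔ perp c := sup_le_sup hta hfperp
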